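/- Let A ∈ ℂ^{n×n}, B ∈ ℂ^{d×d}, E ∈ ℂ^{n×d}, and let D = L_exp(A, B, E). Then D satisfies the Sylvester equation A·D − D·B = exp(A)·E − E·exp(B). -/

import Mathlib

/-- `L_exp(A, B, E)` is the `(1,2)` block of `exp [[A, E],[0, B]]`. -/
noncomputable def Lexp {n d : ℕ} (A : Matrix (Fin n) (Fin n) ℂ) (B : Matrix (Fin d) (Fin d) ℂ)
    (E : Matrix (Fin n) (Fin d) ℂ) : Matrix (Fin n) (Fin d) ℂ :=
  (NormedSpace.exp (Matrix.fromBlocks A E 0 B)).toBlocks₁₂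

/-!
Put `M = [[A, E], [0, B]]`. Every power of `M` is block upper triangular with diagonal blocks
`A ^ k` and `B ^ k`, so summing the exponential series blockwise shows that the diagonal blocks of
`exp M` are `exp A` and `exp B`, while its `(1,2)` block is `Lexp A B E` by definition. Comparing
the `(1,2)` blocks of `M * exp M = exp M * M` is exactly the Sylvester equation.
-/

open NormedSpace
open scoped Nat

theorem NormedSpace.map_exp_of_map_pow {𝕂 𝔸 𝔹 : Type*} [Field 𝕂] [CharZero 𝕂]
    [Ring 𝔸] [Algebra 𝕂 𝔸] [TopologicalSpace 𝔸] [IsTopologicalRing 𝔸]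
    [Ring 𝔹] [Algebra 𝕂 𝔹] [TopologicalSpace 𝔹] [IsTopologicalRing 𝔹] [T2Space 𝔹]
    (f : 𝔸 →ₗ[𝕂] 𝔹) (hf : Continuous f) {x : 𝔸}
    (hx : Summable fun k => (k !⁻¹ : 𝕂) • x ^ k) {y : 𝔹} (hpow : ∀ k, f (x ^ k) = y ^ k) :
    f (exp x) = exp y := by
  have hsum := hx.hasSum.map f hf
  simp only [Function.comp_def, map_smul, hpow] at hsum
  rw [congrFun (exp_eq_tsum 𝕂) x, congrFun (exp_eq_tsum 𝕂) y, hsum.tsum_eq]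

namespace Matrix

variable {l m n o α : Type*}

def submatrixLinearMap (R : Type*) [Semiring R] [AddCommMonoid α] [Module R α]
    (r : l → m) (c : o → n) : Matrix m n α →ₗ[R] Matrix l o α where
  toFun A := A.submatrix r c
  map_add' _ _ := rfl
  map_smul' _ _ := rfl

theorem continuous_submatrixLinearMap (R : Type*) [Semiring R] [AddCommMonoid α] [Module R α]
    [TopologicalSpace α] (r : l → m) (c : o → n) :
    Continuous (submatrixLinearMap (α := α) R r c) :=
  continuous_id.matrix_submatrix r c

theorem fromBlocks_zero₂₁_pow [Fintype m] [Fintype n] [DecidableEq m] [DecidableEq n]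
    [Semiring α] (A : Matrix m m α) (B : Matrix n n α) (E : Matrix m n α) (k : ℕ) :
    ∃ D, fromBlocks A E 0 B ^ k = fromBlocks (A ^ k) D 0 (B ^ k) := by
  induction k with
  | zero => exact ⟨0, by simp only [pow_zero, fromBlocks_one]⟩
  | succ k ih =>
    obtain ⟨D, hD⟩ := ih
    refine ⟨A ^ k * E + D * B, ?_⟩
    rw [pow_succ, hD, fromBlocks_multiply]
    simp [pow_succ]

theorem mul_sub_mul_eq_of_commute_fromBlocks_zero₂₁ [Fintype m] [Fintype n] [Ring α] {A X : Matrix m m α}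
    {B Z : Matrix n n α} {E D : Matrix m n α} {C : Matrix n m α}
    (h : Commute (fromBlocks A E 0 B) (fromBlocks X D C Z)) :
    A * D - D * B = X * E - E * Z := by
  have h₁₂ := congrArg toBlocks₁₂ h.eq
  simp only [fromBlocks_multiply, toBlocks_fromBlocks₁₂] at h₁₂
  linear_combination (norm := abel) h₁₂

variable {𝕂 : Type*} [RCLike 𝕂]

theorem summable_inv_factorial_smul_pow {ι : Type*} [Fintype ι] [DecidableEq ι] (M : Matrix ι ι 𝕂) :
    Summable fun k => (k !⁻¹ : 𝕂) • M ^ k := by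
  let _ : NormedRing (Matrix ι ι 𝕂) := Matrix.linftyOpNormedRing
  let _ : NormedAlgebra 𝕂 (Matrix ι ι 𝕂) := Matrix.linftyOpNormedAlgebra
  -- instance search does not find completeness for this norm through the local instances
  exact @expSeries_summable' 𝕂 _ _ _ _ _ _ (FiniteDimensional.complete 𝕂 _) M

theorem submatrix_exp_of_submatrix_pow {ι : Type*} [Fintype ι] [DecidableEq ι] [Fintype l]
    [DecidableEq l] {M : Matrix ι ι 𝕂} {X : Matrix l l 𝕂} (r c : l → ι)
    (hpow : ∀ k, (M ^ k).submatrix r c = X ^ k) : (exp M).submatrix r c = exp X :=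
  map_exp_of_map_pow (submatrixLinearMap 𝕂 r c) (continuous_submatrixLinearMap 𝕂 r c)
    (summable_inv_factorial_smul_pow M) hpow

variable [Fintype m] [Fintype n] [DecidableEq m] [DecidableEq n]

theorem toBlocks₁₁_exp_fromBlocks_zero₂₁ (A : Matrix m m 𝕂) (B : Matrix n n 𝕂)
    (E : Matrix m n 𝕂) : (exp (fromBlocks A E 0 B)).toBlocks₁₁ = exp A :=
  submatrix_exp_of_submatrix_pow _ _ fun k => by
    obtain ⟨D, hD⟩ := fromBlocks_zero₂₁_pow A B E k
    exact congrArg toBlocks₁₁ hD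

theorem toBlocks₂₂_exp_fromBlocks_zero₂₁ (A : Matrix m m 𝕂) (B : Matrix n n 𝕂)
    (E : Matrix m n 𝕂) : (exp (fromBlocks A E 0 B)).toBlocks₂₂ = exp B :=
  submatrix_exp_of_submatrix_pow _ _ fun k => by
    obtain ⟨D, hD⟩ := fromBlocks_zero₂₁_pow A B E k
    exact congrArg toBlocks₂₂ hD

end Matrix

/-- `D = L_exp(A, B, E)` satisfies the Sylvester equation
`A⬝D − D⬝B = exp(A)⬝E − E⬝exp(B)`. -/
theorem Lexp_sylvester {n d : ℕ} (A : Matrix (Fin n) (Fin n) ℂ)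
    (B : Matrix (Fin d) (Fin d) ℂ) (E : Matrix (Fin n) (Fin d) ℂ) :
    A * Lexp A B E - Lexp A B E * B =
      NormedSpace.exp A * E - E * NormedSpace.exp B := by
  have hcomm := (Commute.refl (Matrix.fromBlocks A E 0 B)).exp_right
  rw [← Matrix.fromBlocks_toBlocks (exp (Matrix.fromBlocks A E 0 B)),
    Matrix.toBlocks₁₁_exp_fromBlocks_zero₂₁, Matrix.toBlocks₂₂_exp_fromBlocks_zero₂₁] at hcomm
  exact Matrix.mul_sub_mul_eq_of_commute_fromBlocks_zero₂₁ hcomm
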